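/- arXiv:2103.10808 — 3 statements merged into one kernel-verified Lean document; each statement's English description precedes it below -/
import Mathlib

section
/- Let G be a labelled acyclic directed multigraph and X a nonempty proper subset of V(G). Then the contraction G/X is again acyclic, provided that the set of arcs [X, V(G)\setminus X] between X and its complement contains no backward arcs (i.e., every arc with one end in X and one end in Y = V(G)\setminus X has its tail in X and head in Y). -/
/-- A labelled directed multigraph: vertex type `V`, arc type `A`, label type `L`,
incidence function `mu` giving (tail, head), and arc labelling `lab`. -/
structure LDMG (V A L : Type) where
  mu : A → V × V
  lab : A → L

namespace LDMG

variable {V A L V' A' : Type}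

/-- The one-step arc relation. -/
def step (G : LDMG V A L) (u v : V) : Prop := ∃ a, G.mu a = (u, v)

/-- `G` is acyclic: no directed cycle. -/
def Acyclic (G : LDMG V A L) : Prop := ∀ v, ¬ Relation.TransGen G.step v v

/-- `v` has in-degree 0 in `G`. -/
def InDegZero (G : LDMG V A L) (v : V) : Prop := ∀ a, (G.mu a).2 ≠ v

/-- `v` has out-degree 0 in `G`. -/
def OutDegZero (G : LDMG V A L) (v : V) : Prop := ∀ a, (G.mu a).1 ≠ v

/-- `peel G n`: the set of vertices deleted after `n` rounds of repeatedly removing the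
vertices of in-degree 0 (together with the arcs with tails there). -/
def peel (G : LDMG V A L) : ℕ → Set V
  | 0 => ∅
  | n + 1 => peel G n ∪ {v | ∀ a, (G.mu a).2 = v → (G.mu a).1 ∈ peel G n}

/-- The level set `S^n(G)`. -/
def levelSet (G : LDMG V A L) (n : ℕ) : Set V := peel G (n + 1) \ peel G n

/-- Vertex type of the contraction `G/X`: the vertices outside `X` together with one new
vertex (`Sum.inr ()`) replacing `X`. -/
def CVertex (X : Set V) : Type := {v : V // v ∉ X} ⊕ Unit

/-- Canonical projection of vertices to contraction vertices. -/
noncomputable def cMap (X : Set V) (v : V) : CVertex X :=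
  haveI := Classical.propDecidable (v ∈ X)
  if h : v ∈ X then Sum.inr () else Sum.inl ⟨v, h⟩

/-- The arcs of `G` surviving the contraction of `X` (i.e. not having both ends in `X`),
before identification of parallel equally-labelled arcs. -/
def CPre (G : LDMG V A L) (X : Set V) : Type :=
  {a : A // ¬ ((G.mu a).1 ∈ X ∧ (G.mu a).2 ∈ X)}

noncomputable def cKey (G : LDMG V A L) (X : Set V) (a : CPre G X) :
    (CVertex X × CVertex X) × L :=
  ((cMap X (G.mu a.1).1, cMap X (G.mu a.1).2), G.lab a.1)

/-- Arc type of `G/X`: surviving arcs, with arcs having identical tail, head and label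
identified. -/
def CArc (G : LDMG V A L) (X : Set V) : Type :=
  Quotient (Setoid.ker (cKey G X))

/-- The contraction `G/X`. -/
noncomputable def contract (G : LDMG V A L) (X : Set V) : LDMG (CVertex X) (CArc G X) L where
  mu := Quotient.lift (fun a => (cKey G X a).1) (fun _ _ h => congrArg Prod.fst h)
  lab := Quotient.lift (fun a => (cKey G X a).2) (fun _ _ h => congrArg Prod.snd h)

/-- The Cartesian product `G □ H`. -/
def box (G : LDMG V A L) (H : LDMG V' A' L) : LDMG (V × V') (A × V' ⊕ V × A') L where
  mu := fun x =>
    match x with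
    | Sum.inl (a, w) => (((G.mu a).1, w), ((G.mu a).2, w))
    | Sum.inr (u, b) => ((u, (H.mu b).1), (u, (H.mu b).2))
  lab := fun x =>
    match x with
    | Sum.inl (a, _) => G.lab a
    | Sum.inr (_, b) => H.lab b

/-- The label `ℓ` occurs in `G`. -/
def HasLab (G : LDMG V A L) (ℓ : L) : Prop := ∃ a, G.lab a = ℓ

/-- Arc type of the intermediate product `G ⊠ H`: asynchronous copies of arcs of `G`
(whose label does not occur in `H`), asynchronous copies of arcs of `H` (whose label
does not occur in `G`), and synchronous arcs for pairs of equally labelled arcs. -/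
def InterArc (G : LDMG V A L) (H : LDMG V' A' L) : Type :=
  {p : A × V' // ¬ H.HasLab (G.lab p.1)} ⊕
  {p : V × A' // ¬ G.HasLab (H.lab p.2)} ⊕
  {p : A × A' // G.lab p.1 = H.lab p.2}

/-- The intermediate product `G ⊠ H`. -/
def inter (G : LDMG V A L) (H : LDMG V' A' L) : LDMG (V × V') (InterArc G H) L where
  mu := fun x =>
    match x with
    | Sum.inl ⟨(a, w), _⟩ => (((G.mu a).1, w), ((G.mu a).2, w))
    | Sum.inr (Sum.inl ⟨(u, b), _⟩) => ((u, (H.mu b).1), (u, (H.mu b).2))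
    | Sum.inr (Sum.inr ⟨(a, b), _⟩) => (((G.mu a).1, (H.mu b).1), ((G.mu a).2, (H.mu b).2))
  lab := fun x =>
    match x with
    | Sum.inl ⟨(a, _), _⟩ => G.lab a
    | Sum.inr (Sum.inl ⟨(_, b), _⟩) => H.lab b
    | Sum.inr (Sum.inr ⟨(a, _), _⟩) => G.lab a

/-- `v` has positive level in `G □ H`, i.e. some in-arc in the Cartesian product. -/
def PosLevelBox (G : LDMG V A L) (H : LDMG V' A' L) (v : V × V') : Prop :=
  ∃ x, ((G.box H).mu x).2 = v

/-- The set of vertices removed after `n` rounds of the VRSP removal process: repeatedly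
remove the vertices having in-degree 0 in the current graph but positive level in `G □ H`
(together with their out-arcs). -/
def vrspRem (G : LDMG V A L) (H : LDMG V' A' L) : ℕ → Set (V × V')
  | 0 => ∅
  | n + 1 => vrspRem G H n ∪
      {v | PosLevelBox G H v ∧
        ∀ x, ((G.inter H).mu x).2 = v → ((G.inter H).mu x).1 ∈ vrspRem G H n}

/-- All vertices eventually removed in the VRSP removal process. -/
def vrspRemoved (G : LDMG V A L) (H : LDMG V' A' L) : Set (V × V') := ⋃ n, vrspRem G H n

/-- Vertex type of the vertex-removing synchronised product `G ⊟ H`. -/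
def VrspV (G : LDMG V A L) (H : LDMG V' A' L) : Type := {v : V × V' // v ∉ vrspRemoved G H}

/-- Arc type of `G ⊟ H`: arcs of `G ⊠ H` with both ends surviving. -/
def VrspArc (G : LDMG V A L) (H : LDMG V' A' L) : Type :=
  {x : InterArc G H // ((G.inter H).mu x).1 ∉ vrspRemoved G H ∧
    ((G.inter H).mu x).2 ∉ vrspRemoved G H}

/-- The vertex-removing synchronised product `G ⊟ H`. -/
def vrsp (G : LDMG V A L) (H : LDMG V' A' L) : LDMG (VrspV G H) (VrspArc G H) L where
  mu := fun x => (⟨((G.inter H).mu x.1).1, x.2.1⟩, ⟨((G.inter H).mu x.1).2, x.2.2⟩)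
  lab := fun x => (G.inter H).lab x.1

/-- Isomorphism of labelled directed multigraphs: a vertex bijection preserving the
existence of arcs together with their labels. -/
def Iso (G : LDMG V A L) {V' A' : Type} (H : LDMG V' A' L) : Prop :=
  ∃ φ : V ≃ V', ∀ u v ℓ,
    (∃ a, G.mu a = (u, v) ∧ G.lab a = ℓ) ↔ (∃ b, H.mu b = (φ u, φ v) ∧ H.lab b = ℓ)

end LDMG


/-! Without backward arcs, an arc of `G` entering `X` has both ends in `X` and disappears in
`G/X`, so the contracted vertex has in-degree 0 and lies on no cycle. Every cycle of `G/X`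
therefore runs through vertices outside `X` only, and lifts to a cycle of `G`. -/

namespace Relation

variable {α β : Type*} {r : α → α → Prop} {s : β → β → Prop}

theorem TransGen.of_map (f : β → α) (hrange : ∀ a b, r a b → b ∈ Set.range f)
    (hs : ∀ x y, r (f x) (f y) → s x y) {x y : β} (h : TransGen r (f x) (f y)) :
    TransGen s x y := by
  suffices ∀ a, TransGen r a (f y) → ∀ x, a = f x → TransGen s x y from this _ h x rfl
  intro a hay
  induction hay using TransGen.head_induction_on with
  | single hay => rintro x rfl; exact .single (hs x y hay)
  | head hac _ ih =>
    rintro x rfl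
    obtain ⟨z, rfl⟩ := hrange _ _ hac
    exact .head (hs x z hac) (ih z rfl)

end Relation

namespace LDMG

variable {V A L : Type}

@[simp]
theorem cMap_of_mem {X : Set V} {v : V} (h : v ∈ X) : cMap X v = Sum.inr () := dif_pos h

@[simp]
theorem cMap_of_notMem {X : Set V} {v : V} (h : v ∉ X) : cMap X v = Sum.inl ⟨v, h⟩ :=
  dif_neg h

theorem contract_step_iff (G : LDMG V A L) (X : Set V) (p q : CVertex X) :
    (G.contract X).step p q ↔
      ∃ a, ¬((G.mu a).1 ∈ X ∧ (G.mu a).2 ∈ X) ∧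
        cMap X (G.mu a).1 = p ∧ cMap X (G.mu a).2 = q := by
  constructor
  · rintro ⟨c, hc⟩
    obtain ⟨⟨a, ha⟩, rfl⟩ := Quotient.exists_rep c
    exact ⟨a, ha, congrArg Prod.fst hc, congrArg Prod.snd hc⟩
  · rintro ⟨a, ha, rfl, rfl⟩
    exact ⟨Quotient.mk _ ⟨a, ha⟩, rfl⟩

theorem step_of_contract_step_inl (G : LDMG V A L) {X : Set V} {u w : {v : V // v ∉ X}}
    (h : (G.contract X).step (Sum.inl u) (Sum.inl w)) : G.step u w := by
  obtain ⟨a, -, htail, hhead⟩ := (G.contract_step_iff X _ _).1 h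
  have cMap_eq {v : V} {z : {v : V // v ∉ X}} (hv : cMap X v = Sum.inl z) : v = z := by
    by_cases hvX : v ∈ X
    · simp [cMap_of_mem hvX] at hv
    · rw [cMap_of_notMem hvX] at hv
      exact congrArg Subtype.val (Sum.inl.inj hv)
  exact ⟨a, Prod.ext (cMap_eq htail) (cMap_eq hhead)⟩

theorem contract_step_target_mem_range (G : LDMG V A L) {X : Set V}
    (hnoback : ∀ a : A, (G.mu a).2 ∈ X → (G.mu a).1 ∈ X) {p q : CVertex X}
    (h : (G.contract X).step p q) : q ∈ Set.range Sum.inl := by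
  obtain ⟨a, ha, -, rfl⟩ := (G.contract_step_iff X _ _).1 h
  have hhead : (G.mu a).2 ∉ X := fun hX => ha ⟨hnoback a hX, hX⟩
  exact ⟨_, (cMap_of_notMem hhead).symm⟩

end LDMG

theorem contract_acyclic_general {V A L : Type} (G : LDMG V A L) (hacyc : G.Acyclic)
    (X : Set V)
    (hnoback : ∀ a : A, (G.mu a).2 ∈ X → (G.mu a).1 ∈ X) :
    (G.contract X).Acyclic := by
  intro p hcyc
  obtain ⟨q, -, hqp⟩ := Relation.TransGen.tail'_iff.1 hcyc
  obtain ⟨w, rfl⟩ := G.contract_step_target_mem_range hnoback hqp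
  have hlift : Relation.TransGen (fun u v : {v : V // v ∉ X} => G.step u v) w w :=
    Relation.TransGen.of_map Sum.inl (fun _ _ h => G.contract_step_target_mem_range hnoback h)
      (fun _ _ h => G.step_of_contract_step_inl h) hcyc
  exact hacyc w (Relation.TransGen.lift Subtype.val (fun _ _ h => h) _ _ hlift)

/-- The contraction `G/X` of an acyclic labelled directed multigraph `G` by a nonempty
proper subset `X` of its vertices is again acyclic, provided `[X, V ∖ X]` has no backward
arcs (every arc with head in `X` has its tail in `X`). -/
theorem contract_acyclic {V A L : Type} (G : LDMG V A L) (hacyc : G.Acyclic)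
    (X : Set V) (hXne : X.Nonempty) (hXproper : X ≠ Set.univ)
    (hnoback : ∀ a : A, (G.mu a).2 ∈ X → (G.mu a).1 ∈ X) :
    (G.contract X).Acyclic :=
  contract_acyclic_general G hacyc X hnoback
end

section
/- Let G be a labelled acyclic directed multigraph, X a nonempty proper subset of V(G) containing all in-degree-0 vertices of G, and Y = V(G)\setminus X, with [X,Y] having no backward arcs. Then in the Cartesian product (G/Y) \Box (G/X), every vertex of the form (u,v) with u in X and v in Y has positive level (i.e., in-degree > 0 in some stage of the peeling; equivalently (u,v) is not in S^0). -/
namespace LDMG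

variable {V A L V' A' : Type}

/-- An in-arc of `v ∉ X` does not have both ends in `X`, so it survives in `G/X`. -/
theorem not_inDegZero_contract {G : LDMG V A L} {X : Set V} {v : V} (hvX : v ∉ X)
    (hv : ¬ G.InDegZero v) : ¬ (G.contract X).InDegZero (cMap X v) := by
  simp only [InDegZero, not_forall, not_not] at hv ⊢
  obtain ⟨a, rfl⟩ := hv
  exact ⟨Quotient.mk _ ⟨a, fun h => hvX h.2⟩, rfl⟩

theorem not_inDegZero_box_of_right {G : LDMG V A L} {H : LDMG V' A' L} (u : V) {w : V'}
    (hw : ¬ H.InDegZero w) : ¬ (G.box H).InDegZero (u, w) := by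
  simp only [InDegZero, not_forall, not_not] at hw ⊢
  obtain ⟨b, rfl⟩ := hw
  exact ⟨Sum.inr (u, b), rfl⟩

end LDMG

theorem box_mixed_vertices_positive_level_general {V A L : Type}
    (G : LDMG V A L)
    (X Y : Set V) (hY : Y = Xᶜ)
    (hsource : ∀ v : V, G.InDegZero v → v ∈ X) :
    ∀ u ∈ X, ∀ v ∈ Y,
      ¬ ((G.contract Y).box (G.contract X)).InDegZero (LDMG.cMap Y u, LDMG.cMap X v) := by
  intro u _ v hv
  have hvX : v ∉ X := by rwa [hY] at hv
  exact LDMG.not_inDegZero_box_of_right _ <|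
    LDMG.not_inDegZero_contract hvX fun h => hvX (hsource v h)

/-- If all in-degree-0 vertices of `G` lie in `X` and `[X,Y]` has no backward arcs
(`Y = V(G) ∖ X`), then in the Cartesian product `(G/Y) □ (G/X)` every vertex `(u, v)`
with `u ∈ X` and `v ∈ Y` has positive level, i.e. is not of in-degree 0. -/
theorem box_mixed_vertices_positive_level {V A L : Type} [Fintype V] [Fintype A]
    (G : LDMG V A L) (hacyc : G.Acyclic)
    (X Y : Set V) (hXne : X.Nonempty) (hXproper : X ≠ Set.univ) (hY : Y = Xᶜ)
    (hsource : ∀ v : V, G.InDegZero v → v ∈ X)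
    (hnoback : ∀ a : A, (G.mu a).2 ∈ X → (G.mu a).1 ∈ X) :
    ∀ u ∈ X, ∀ v ∈ Y,
      ¬ ((G.contract Y).box (G.contract X)).InDegZero (LDMG.cMap Y u, LDMG.cMap X v) :=
  box_mixed_vertices_positive_level_general G X Y hY hsource
end

section
/- Let G and H be finite labelled acyclic directed multigraphs. Then the vertex-removing synchronised product G \boxbackslash H is acyclic, and every vertex of G \boxbackslash H that has in-degree 0 already had level 0 in the Cartesian product G \Box H. -/
/-! A step of `G ⊠ H` advances strictly in the product of the reachability preorders of `G` and
`H`, so a cycle in `G ⊠ H` would project to a cycle in `G` or in `H`; `G ⊟ H` is a subgraph of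
`G ⊠ H`. The removal rounds form an increasing chain of subsets of a finite set, hence stabilise
at some round `N`. A surviving vertex of positive level was not removed in round `N + 1`, so it
has an in-arc whose tail survived round `N`, hence survives forever: the arc lies in `G ⊟ H`. -/

open Relation

theorem Set.exists_iUnion_eq_of_monotone {α : Type*} [Finite α] {s : ℕ → Set α}
    (hs : Monotone s) : ∃ N, ⋃ n, s n = s N := by
  obtain ⟨N, hN⟩ := WellFoundedGT.monotone_chain_condition ⟨s, hs⟩
  refine ⟨N, (Set.iUnion_subset fun m => ?_).antisymm (Set.subset_iUnion s N)⟩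
  rcases le_total m N with h | h
  · exact hs h
  · exact (hN m h).ge

namespace Relation

variable {α β : Type*} {r : α → α → Prop} {s : β → β → Prop}

def ProdStrict (r : α → α → Prop) (s : β → β → Prop) (p q : α × β) : Prop :=
  (TransGen r p.1 q.1 ∧ ReflTransGen s p.2 q.2) ∨ (ReflTransGen r p.1 q.1 ∧ TransGen s p.2 q.2)

instance : IsTrans (α × β) (ProdStrict r s) where
  trans _ _ _ h₁ h₂ := by
    rcases h₁ with ⟨a₁, b₁⟩ | ⟨a₁, b₁⟩ <;> rcases h₂ with ⟨a₂, b₂⟩ | ⟨a₂, b₂⟩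
    · exact .inl ⟨a₁.trans a₂, b₁.trans b₂⟩
    · exact .inl ⟨a₁.trans_left a₂, b₁.trans b₂.to_reflTransGen⟩
    · exact .inl ⟨TransGen.trans_right a₁ a₂, b₁.to_reflTransGen.trans b₂⟩
    · exact .inr ⟨a₁.trans a₂, b₁.trans b₂⟩

theorem ProdStrict.irrefl (hr : ∀ a, ¬ TransGen r a a) (hs : ∀ b, ¬ TransGen s b b)
    (p : α × β) : ¬ ProdStrict r s p p := by
  rintro (⟨h, -⟩ | ⟨-, h⟩)
  exacts [hr _ h, hs _ h]

end Relation

namespace LDMG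

variable {V A L V' A' : Type}

theorem Acyclic.of_step_map {W B L' : Type} {G : LDMG V A L} {G' : LDMG W B L'} (f : V → W)
    (hf : ∀ u v, G.step u v → G'.step (f u) (f v)) (hG' : G'.Acyclic) : G.Acyclic :=
  fun v hv => hG' (f v) (TransGen.lift f hf v v hv)

theorem inter_step_prodStrict (G : LDMG V A L) (H : LDMG V' A' L) {p q : V × V'}
    (h : (G.inter H).step p q) : ProdStrict G.step H.step p q := by
  obtain ⟨x, hx⟩ := h
  obtain ⟨rfl, rfl⟩ := Prod.ext_iff.1 hx
  rcases x with ⟨⟨a, w⟩, _⟩ | ⟨⟨u, b⟩, _⟩ | ⟨⟨a, b⟩, _⟩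
  · exact .inl ⟨.single ⟨a, rfl⟩, .refl⟩
  · exact .inr ⟨.refl, .single ⟨b, rfl⟩⟩
  · exact .inl ⟨.single ⟨a, rfl⟩, .single ⟨b, rfl⟩⟩

theorem Acyclic.inter {G : LDMG V A L} {H : LDMG V' A' L} (hG : G.Acyclic) (hH : H.Acyclic) :
    (G.inter H).Acyclic := fun p hp =>
  ProdStrict.irrefl hG hH p <| transGen_eq_self (r := ProdStrict G.step H.step) ▸
    TransGen.mono (fun _ _ => inter_step_prodStrict G H) p p hp

theorem vrsp_step_val (G : LDMG V A L) (H : LDMG V' A' L) {u v : VrspV G H}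
    (h : (G.vrsp H).step u v) : (G.inter H).step u.1 v.1 := by
  obtain ⟨x, hx⟩ := h
  exact ⟨x.1, congrArg (Prod.map Subtype.val Subtype.val) hx⟩

theorem Acyclic.vrsp {G : LDMG V A L} {H : LDMG V' A' L} (hG : G.Acyclic) (hH : H.Acyclic) :
    (G.vrsp H).Acyclic :=
  (hG.inter hH).of_step_map Subtype.val fun _ _ => vrsp_step_val G H

theorem vrspRem_mono (G : LDMG V A L) (H : LDMG V' A' L) : Monotone (vrspRem G H) :=
  monotone_nat_of_le_succ fun _ _ h => Or.inl h

theorem exists_inter_arc_of_notMem_vrspRemoved [Finite V] [Finite V'] {G : LDMG V A L}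
    {H : LDMG V' A' L} {v : V × V'} (hpos : PosLevelBox G H v) (hv : v ∉ vrspRemoved G H) :
    ∃ x, ((G.inter H).mu x).2 = v ∧ ((G.inter H).mu x).1 ∉ vrspRemoved G H := by
  obtain ⟨N, hN⟩ := Set.exists_iUnion_eq_of_monotone (vrspRem_mono G H)
  have hvN : v ∉ vrspRem G H (N + 1) := fun h => hv (Set.mem_iUnion.2 ⟨N + 1, h⟩)
  simp only [vrspRem, Set.mem_union, Set.mem_ofPred_eq, not_or, not_and, not_forall] at hvN
  obtain ⟨x, hhead, htail⟩ := hvN.2 hpos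
  exact ⟨x, hhead, by rwa [vrspRemoved, hN]⟩

end LDMG

theorem vrsp_acyclic_and_sources_general {V A L V' A' : Type}
    [Fintype V] [Fintype V']
    (G : LDMG V A L) (H : LDMG V' A' L) (hG : G.Acyclic) (hH : H.Acyclic) :
    (G.vrsp H).Acyclic ∧
    ∀ v : LDMG.VrspV G H, (G.vrsp H).InDegZero v →
      ¬ LDMG.PosLevelBox G H (Subtype.val v) := by
  refine ⟨hG.vrsp hH, fun v hdeg hpos => ?_⟩
  obtain ⟨x, hhead, htail⟩ := LDMG.exists_inter_arc_of_notMem_vrspRemoved hpos v.2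
  exact hdeg ⟨x, htail, hhead ▸ v.2⟩ (Subtype.ext hhead)

/-- The vertex-removing synchronised product of finite labelled acyclic directed
multigraphs is acyclic, and every in-degree-0 vertex of `G ⊟ H` already had level 0 in
the Cartesian product `G □ H`. -/
theorem vrsp_acyclic_and_sources {V A L V' A' : Type}
    [Fintype V] [Fintype A] [Fintype V'] [Fintype A']
    (G : LDMG V A L) (H : LDMG V' A' L) (hG : G.Acyclic) (hH : H.Acyclic) :
    (G.vrsp H).Acyclic ∧
    ∀ v : LDMG.VrspV G H, (G.vrsp H).InDegZero v →
      ¬ LDMG.PosLevelBox G H (Subtype.val v) :=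
  vrsp_acyclic_and_sources_general G H hG hH
end
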